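/- arXiv:2604.24183 — 4 statements merged into one kernel-verified Lean document; each statement's English description precedes it below -/
import Mathlib

section
/- For every finite simple graph G without isolated edges, χ'_sCF(G) ≤ χ'_CF(G) ≤ χ'_sCF(G) + 1. -/
open SimpleGraph

variable {V : Type*}

/-- The closed edge-neighborhood of an edge `uv`: all edges incident to `u` or `v`. -/
def edgeNbhd (G : SimpleGraph V) (u v : V) : Set (Sym2 V) :=
  G.incidenceSet u ∪ G.incidenceSet v

/-- An edge `uv` is satisfied by a partial edge coloring `φ` if some color appears
exactly once among the colored edges incident to `u` or `v`. -/
def Satisfied (G : SimpleGraph V) (φ : Sym2 V → Option ℕ) (u v : V) : Prop :=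
  ∃ c : ℕ, {e | e ∈ edgeNbhd G u v ∧ φ e = some c}.ncard = 1

/-- A partial edge coloring of `G` with `k` colors such that every edge of `G` is satisfied. -/
def IsPartialSCF (G : SimpleGraph V) (k : ℕ) (φ : Sym2 V → Option ℕ) : Prop :=
  (∀ e c, φ e = some c → e ∈ G.edgeSet ∧ c < k) ∧
  ∀ ⦃u v⦄, G.Adj u v → Satisfied G φ u v

/-- `χ'_sCF(G)`. -/
noncomputable def sCFIndex (G : SimpleGraph V) : ℕ :=
  sInf {k | ∃ φ, IsPartialSCF G k φ}

/-- A (total) conflict-free edge coloring of `G` with `k` colors. -/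
def IsCF (G : SimpleGraph V) (k : ℕ) (φ : Sym2 V → ℕ) : Prop :=
  (∀ e ∈ G.edgeSet, φ e < k) ∧
  ∀ ⦃u v⦄, G.Adj u v → ∃ c : ℕ, {e | e ∈ edgeNbhd G u v ∧ φ e = c}.ncard = 1

/-- `χ'_CF(G)`, the conflict-free chromatic index. -/
noncomputable def cfIndex (G : SimpleGraph V) : ℕ :=
  sInf {k | ∃ φ, IsCF G k φ}

/-- The neighborhood of a set of vertices. -/
def NbhdSet (G : SimpleGraph V) (S : Set V) : Set V :=
  ⋃ x ∈ S, G.neighborSet x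

/-- The set of private neighbors of `x` with respect to `D`. -/
def privNbrs (G : SimpleGraph V) (D : Set V) (x : V) : Set V :=
  {y ∈ G.neighborSet x | G.neighborSet y ∩ D = {x}}

/-- The number of edges of `F` incident to `v`. -/
noncomputable def edegOn (F : Set (Sym2 V)) (v : V) : ℕ :=
  {e ∈ F | v ∈ e}.ncard

/-! Restricting a conflict-free coloring to the edges of `G` is a partial one; conversely a partial
coloring becomes total by giving every uncolored edge the new color `k`, which cannot disturb the
color `c < k` that was unique around an edge. So either both kinds of coloring exist, or neither
does and both indices are the junk value `sInf ∅ = 0`. -/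

lemma edgeNbhd_subset_edgeSet (G : SimpleGraph V) (u v : V) : edgeNbhd G u v ⊆ G.edgeSet :=
  Set.union_subset (G.incidenceSet_subset u) (G.incidenceSet_subset v)

lemma IsCF.exists_isPartialSCF {G : SimpleGraph V} {k : ℕ} {φ : Sym2 V → ℕ} (h : IsCF G k φ) :
    ∃ ψ, IsPartialSCF G k ψ := by
  classical
  refine ⟨fun e => if e ∈ G.edgeSet then some (φ e) else none, ?_, ?_⟩
  · intro e c hc
    dsimp only at hc
    split_ifs at hc with he
    · exact ⟨he, Option.some.inj hc ▸ h.1 e he⟩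
  · intro u v huv
    obtain ⟨c, hc⟩ := h.2 huv
    refine ⟨c, ?_⟩
    convert hc using 2
    refine Set.ext fun e => and_congr_right fun he => ?_
    simp [edgeNbhd_subset_edgeSet G u v he]

lemma IsPartialSCF.exists_isCF_succ {G : SimpleGraph V} {k : ℕ} {φ : Sym2 V → Option ℕ}
    (h : IsPartialSCF G k φ) : ∃ ψ, IsCF G (k + 1) ψ := by
  refine ⟨fun e => (φ e).getD k, ?_, ?_⟩
  · intro e _
    dsimp only
    cases hφ : φ e with
    | none => simp
    | some c => simpa using (h.1 e c hφ).2.le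
  · intro u v huv
    obtain ⟨c, hc⟩ := h.2 huv
    have hck : c < k := by
      obtain ⟨e₀, he₀⟩ := Set.ncard_eq_one.mp hc
      have he₀c : φ e₀ = some c := (he₀.symm ▸ Set.mem_singleton e₀ :
        e₀ ∈ {e | e ∈ edgeNbhd G u v ∧ φ e = some c}).2
      exact (h.1 e₀ c he₀c).2
    refine ⟨c, ?_⟩
    convert hc using 2
    refine Set.ext fun e => and_congr_right fun _ => ?_
    dsimp only
    cases φ e with
    | none => simpa using hck.ne'
    | some c' => simp

lemma Nat.sInf_le_sInf_and_sInf_le_sInf_add_one {A B : Set ℕ} (hAB : A ⊆ B)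
    (hBA : ∀ k ∈ B, k + 1 ∈ A) : sInf B ≤ sInf A ∧ sInf A ≤ sInf B + 1 := by
  rcases B.eq_empty_or_nonempty with rfl | hB
  · simp [Set.subset_empty_iff.mp hAB]
  have hA : A.Nonempty := ⟨_, hBA _ (Nat.sInf_mem hB)⟩
  exact ⟨Nat.sInf_le (hAB (Nat.sInf_mem hA)), Nat.sInf_le (hBA _ (Nat.sInf_mem hB))⟩

theorem stmt_3_general (G : SimpleGraph V) :
    sCFIndex G ≤ cfIndex G ∧ cfIndex G ≤ sCFIndex G + 1 :=
  Nat.sInf_le_sInf_and_sInf_le_sInf_add_one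
    (fun _ ⟨_, hφ⟩ => hφ.exists_isPartialSCF) (fun _ ⟨_, hφ⟩ => hφ.exists_isCF_succ)

theorem stmt_3 [Fintype V] (G : SimpleGraph V)
    (hnoIsolEdge : ∀ ⦃u v⦄, G.Adj u v →
      ∃ w, w ≠ u ∧ w ≠ v ∧ (G.Adj u w ∨ G.Adj v w)) :
    sCFIndex G ≤ cfIndex G ∧ cfIndex G ≤ sCFIndex G + 1 :=
  stmt_3_general G
end

section
/- If G is a bipartite graph without isolated vertices, then χ'_sCF(G) ≤ 2, i.e., there exists a partial edge coloring of G with 2 colors such that every edge of G is satisfied. -/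
/-!
Split the vertices as `A ∪ B` and let `D` be an inclusion-minimal set dominating `B`. By
minimality every `x ∈ D` has a private neighbour `p x ∈ B`, one whose only neighbour in `D` is
`x`. Colour the edges `x (p x)` with `0`, and join every other `w ∈ B` to some neighbour
`d w ∈ D` by an edge of colour `1`. For an edge `uv` with `u ∈ A`, `v ∈ B`: if `u ∈ D`,
colour `0` occurs near `uv` only on `u (p u)`; if `u ∉ D` and `v = p x`, only on `x v`;
otherwise no coloured edge meets `u`, and colour `1` occurs only on `(d v) v`.
-/

open SimpleGraph

variable {V : Type*}

section

variable {G : SimpleGraph V}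

lemma mem_or_mem_of_mem_edgeNbhd {u v : V} {e : Sym2 V} (he : e ∈ edgeNbhd G u v) :
    u ∈ e ∨ v ∈ e :=
  he.imp And.right And.right

lemma satisfied_comm {φ : Sym2 V → Option ℕ} {u v : V} :
    Satisfied G φ u v ↔ Satisfied G φ v u := by
  simp only [Satisfied, edgeNbhd, Set.union_comm]

lemma satisfied_of_forall_eq {φ : Sym2 V → Option ℕ} {u v : V} {c : ℕ} {e₀ : Sym2 V}
    (he₀ : e₀ ∈ edgeNbhd G u v) (hc : φ e₀ = some c)
    (huniq : ∀ e ∈ edgeNbhd G u v, φ e = some c → e = e₀) : Satisfied G φ u v :=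
  ⟨c, Set.ncard_eq_one.2 ⟨e₀, Set.eq_singleton_iff_unique_mem.2
    ⟨⟨he₀, hc⟩, fun e he => huniq e he.1 he.2⟩⟩⟩

lemma eq_left_of_mem_mk_of_disjoint {A B : Set V} (hAB : Disjoint A B) {a b u : V}
    (hb : b ∈ B) (hu : u ∈ A) (h : u ∈ s(a, b)) : u = a :=
  (Sym2.mem_iff.1 h).resolve_right fun hub => Set.disjoint_left.1 hAB hu (hub ▸ hb)

lemma eq_right_of_mem_mk_of_disjoint {A B : Set V} (hAB : Disjoint A B) {a b v : V}
    (ha : a ∈ A) (hv : v ∈ B) (h : v ∈ s(a, b)) : v = b :=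
  (Sym2.mem_iff.1 h).resolve_left fun hva => Set.disjoint_left.1 hAB ha (hva ▸ hv)

lemma eq_or_eq_of_mem_mk_of_disjoint {A B : Set V} (hAB : Disjoint A B) {a b u v : V}
    (ha : a ∈ A) (hb : b ∈ B) (hu : u ∈ A) (hv : v ∈ B)
    (h : u ∈ s(a, b) ∨ v ∈ s(a, b)) : u = a ∨ v = b :=
  h.imp (eq_left_of_mem_mk_of_disjoint hAB hb hu) (eq_right_of_mem_mk_of_disjoint hAB ha hv)

lemma mem_nbhdSet {S : Set V} {y : V} : y ∈ NbhdSet G S ↔ ∃ x ∈ S, G.Adj x y := by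
  simp [NbhdSet]

lemma eq_of_adj_of_mem_privNbrs {D : Set V} {x x' y : V} (hy : y ∈ privNbrs G D x)
    (hx' : x' ∈ D) (hadj : G.Adj x' y) : x' = x := by
  have h : x' ∈ G.neighborSet y ∩ D := ⟨hadj.symm, hx'⟩
  rwa [hy.2] at h

lemma exists_minimal_dominating [Fintype V] {B : Set V} (hB : ∀ b ∈ B, ∃ x, G.Adj x b) :
    ∃ D : Finset V, Minimal (fun D : Finset V => B ⊆ NbhdSet G D) D :=
  exists_minimal_of_wellFoundedLT _
    ⟨Finset.univ, fun b hb => by simpa [mem_nbhdSet] using hB b hb⟩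

lemma exists_mem_privNbrs_of_minimal {B : Set V} {D : Finset V}
    (hD : Minimal (fun D : Finset V => B ⊆ NbhdSet G D) D) {x : V} (hx : x ∈ D) :
    ∃ y ∈ B, y ∈ privNbrs G D x := by
  classical
  by_contra! hnone
  suffices hdom : B ⊆ NbhdSet G (D.erase x) from
    Finset.notMem_erase x D (hD.2 hdom (Finset.erase_subset x D) hx)
  intro b hb
  obtain ⟨y, hy, hyb⟩ := mem_nbhdSet.1 (hD.1 hb)
  rw [mem_nbhdSet]
  by_contra! hnot
  have honly : ∀ x' ∈ D, G.Adj x' b → x' = x := fun x' hx' hadj =>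
    by_contra fun hne => hnot x' (Finset.mem_erase.2 ⟨hne, hx'⟩) hadj
  obtain rfl := honly y hy hyb
  exact hnone b hb ⟨hyb, Set.eq_singleton_iff_unique_mem.2
    ⟨⟨hyb.symm, hy⟩, fun x' hx' => honly x' hx'.2 hx'.1.symm⟩⟩

open Classical in
noncomputable def dominationColoring (D : Finset V) (B : Set V) (p d : V → V) :
    Sym2 V → Option ℕ :=
  fun e => if ∃ x ∈ D, e = s(x, p x) then some 0
    else if ∃ w ∈ B, e = s(d w, w) then some 1 else none

section dominationColoring

variable {D : Finset V} {B : Set V} {p d : V → V} {e : Sym2 V}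

lemma dominationColoring_eq_some_iff {c : ℕ} :
    dominationColoring D B p d e = some c ↔
      c = 0 ∧ (∃ x ∈ D, e = s(x, p x)) ∨
      c = 1 ∧ (¬∃ x ∈ D, e = s(x, p x)) ∧ ∃ w ∈ B, e = s(d w, w) := by
  unfold dominationColoring
  split_ifs <;> grind

lemma dominationColoring_eq_some_zero_iff :
    dominationColoring D B p d e = some 0 ↔ ∃ x ∈ D, e = s(x, p x) := by
  simp [dominationColoring_eq_some_iff]

lemma dominationColoring_eq_some_one_iff :
    dominationColoring D B p d e = some 1 ↔
      (¬∃ x ∈ D, e = s(x, p x)) ∧ ∃ w ∈ B, e = s(d w, w) := by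
  simp [dominationColoring_eq_some_iff]

variable {A : Set V} {u v : V}

lemma satisfied_dominationColoring_of_mem (hAB : Disjoint A B) (hDA : ↑D ⊆ A)
    (hpB : ∀ x ∈ D, p x ∈ B) (hpriv : ∀ x ∈ D, p x ∈ privNbrs G D x)
    (hu : u ∈ A) (hv : v ∈ B) (huv : G.Adj u v) (huD : u ∈ D) :
    Satisfied G (dominationColoring D B p d) u v := by
  refine satisfied_of_forall_eq (Or.inl ((G.mk'_mem_incidenceSet_left_iff).2 (hpriv u huD).1))
    (dominationColoring_eq_some_zero_iff.2 ⟨u, huD, rfl⟩) fun e he he0 => ?_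
  obtain ⟨x, hx, rfl⟩ := dominationColoring_eq_some_zero_iff.1 he0
  rcases eq_or_eq_of_mem_mk_of_disjoint hAB (hDA hx) (hpB x hx) hu hv
    (mem_or_mem_of_mem_edgeNbhd he) with rfl | rfl
  · rfl
  · rw [eq_of_adj_of_mem_privNbrs (hpriv x hx) huD huv]

lemma satisfied_dominationColoring_of_eq (hAB : Disjoint A B) (hDA : ↑D ⊆ A)
    (hpB : ∀ x ∈ D, p x ∈ B) (hpriv : ∀ x ∈ D, p x ∈ privNbrs G D x)
    (hu : u ∈ A) (huD : u ∉ D) {x₀ : V} (hx₀ : x₀ ∈ D) :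
    Satisfied G (dominationColoring D B p d) u (p x₀) := by
  refine satisfied_of_forall_eq (Or.inr ((G.mk'_mem_incidenceSet_right_iff).2 (hpriv x₀ hx₀).1))
    (dominationColoring_eq_some_zero_iff.2 ⟨x₀, hx₀, rfl⟩) fun e he he0 => ?_
  obtain ⟨x, hx, rfl⟩ := dominationColoring_eq_some_zero_iff.1 he0
  rcases eq_or_eq_of_mem_mk_of_disjoint hAB (hDA hx) (hpB x hx) hu (hpB x₀ hx₀)
    (mem_or_mem_of_mem_edgeNbhd he) with rfl | hpx
  · exact absurd hx huD
  · rw [eq_of_adj_of_mem_privNbrs (hpriv x hx) hx₀ (hpx ▸ (hpriv x₀ hx₀).1)]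

lemma satisfied_dominationColoring_of_forall_ne (hAB : Disjoint A B) (hDA : ↑D ⊆ A)
    (hdD : ∀ w ∈ B, d w ∈ D) (hdadj : ∀ w ∈ B, G.Adj (d w) w)
    (hu : u ∈ A) (hv : v ∈ B) (huD : u ∉ D) (hvp : ∀ x ∈ D, p x ≠ v) :
    Satisfied G (dominationColoring D B p d) u v := by
  have hunmatched : ¬∃ x ∈ D, s(d v, v) = s(x, p x) := by
    rintro ⟨x, hx, hdv⟩
    exact hvp x hx (eq_right_of_mem_mk_of_disjoint hAB (hDA hx) hv
      (hdv ▸ Sym2.mem_mk_right _ _)).symm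
  refine satisfied_of_forall_eq (Or.inr ((G.mk'_mem_incidenceSet_right_iff).2 (hdadj v hv)))
    (dominationColoring_eq_some_one_iff.2 ⟨hunmatched, v, hv, rfl⟩) fun e he he1 => ?_
  obtain ⟨w, hw, rfl⟩ := (dominationColoring_eq_some_one_iff.1 he1).2
  rcases eq_or_eq_of_mem_mk_of_disjoint hAB (hDA (hdD w hw)) hw hu hv
    (mem_or_mem_of_mem_edgeNbhd he) with rfl | rfl
  · exact absurd (hdD w hw) huD
  · rfl

lemma satisfied_dominationColoring (hG : G.IsBipartiteWith A B)
    (hpB : ∀ x ∈ D, p x ∈ B) (hpriv : ∀ x ∈ D, p x ∈ privNbrs G D x)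
    (hdD : ∀ w ∈ B, d w ∈ D) (hdadj : ∀ w ∈ B, G.Adj (d w) w) (huv : G.Adj u v) :
    Satisfied G (dominationColoring D B p d) u v := by
  wlog horient : u ∈ A ∧ v ∈ B generalizing u v
  · exact satisfied_comm.1 <| this huv.symm <|
      (hG.mem_of_adj huv).resolve_left horient |>.symm
  obtain ⟨hu, hv⟩ := horient
  have hDA : ↑D ⊆ A := fun x hx => hG.mem_of_mem_adj' (hpB x hx) (hpriv x hx).1
  by_cases huD : u ∈ D
  · exact satisfied_dominationColoring_of_mem hG.disjoint hDA hpB hpriv hu hv huv huD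
  by_cases hvp : ∃ x ∈ D, p x = v
  · obtain ⟨x₀, hx₀, rfl⟩ := hvp
    exact satisfied_dominationColoring_of_eq hG.disjoint hDA hpB hpriv hu huD hx₀
  push Not at hvp
  exact satisfied_dominationColoring_of_forall_ne hG.disjoint hDA hdD hdadj hu hv huD hvp

lemma isPartialSCF_dominationColoring (hG : G.IsBipartiteWith A B)
    (hpB : ∀ x ∈ D, p x ∈ B) (hpriv : ∀ x ∈ D, p x ∈ privNbrs G D x)
    (hdD : ∀ w ∈ B, d w ∈ D) (hdadj : ∀ w ∈ B, G.Adj (d w) w) :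
    IsPartialSCF G 2 (dominationColoring D B p d) := by
  refine ⟨fun e c hc => ?_, fun u v => satisfied_dominationColoring hG hpB hpriv hdD hdadj⟩
  rcases dominationColoring_eq_some_iff.1 hc with ⟨rfl, x, hx, rfl⟩ | ⟨rfl, -, w, hw, rfl⟩
  · exact ⟨(hpriv x hx).1, by norm_num⟩
  · exact ⟨hdadj w hw, by norm_num⟩

end dominationColoring

end

theorem stmt_4 [Fintype V] (G : SimpleGraph V) (hbip : G.Colorable 2)
    (hiso : ∀ v : V, ∃ u, G.Adj v u) :
    ∃ φ : Sym2 V → Option ℕ, IsPartialSCF G 2 φ := by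
  obtain ⟨A, B, hG⟩ := IsBipartite.exists_isBipartiteWith hbip
  obtain ⟨D, hD⟩ := exists_minimal_dominating (B := B) fun b _ => (hiso b).imp fun _ h => h.symm
  choose! p hpB hpriv using fun x (hx : x ∈ D) => exists_mem_privNbrs_of_minimal hD hx
  choose! d hdD hdadj using fun w (hw : w ∈ B) => mem_nbhdSet.1 (hD.1 hw)
  exact ⟨_, isPartialSCF_dominationColoring hG hpB hpriv hdD hdadj⟩
end

section
/- If G is a bipartite graph without isolated vertices, then χ'_CF(G) ≤ 3, i.e., G admits an edge coloring with 3 colors such that for every edge uv, some color appears exactly once on the edges incident to u or v. -/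
open SimpleGraph

variable {V : Type*}

/-!
Let `A`, `B` be the sides of the bipartition. Choose `D ⊆ A` dominating `B` of minimum size; by
minimality every `x ∈ D` has a private neighbour `p x ∈ B`, adjacent to no other vertex of `D`.
Colour the edges `x — p x` (`x ∈ D`) with `1`, for every other `b ∈ B` one edge from `b` into `D`
with `2`, and all remaining edges with `0`. For an edge `uv` with `u ∈ A`, `v ∈ B`, at most one
`x ∈ D` satisfies `x = u ∨ p x = v`; if there is one, `x — p x` is the only edge of colour `1`
near `uv`, and otherwise the edge of colour `2` at `v` is the only one of its colour near `uv`.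
-/

namespace SimpleGraph

variable {V : Type*} {G : SimpleGraph V}

lemma mem_edgeNbhd {u v : V} {e : Sym2 V} :
    e ∈ edgeNbhd G u v ↔ e ∈ G.edgeSet ∧ (u ∈ e ∨ v ∈ e) := by
  simp only [edgeNbhd, incidenceSet, Set.mem_union, Set.mem_ofPred_eq]
  tauto

lemma edgeNbhd_comm (u v : V) : edgeNbhd G u v = edgeNbhd G v u :=
  Set.union_comm _ _

lemma ncard_colorClass_eq_one {φ : Sym2 V → ℕ} {u v : V} {c : ℕ} {e₀ : Sym2 V}
    (he₀ : e₀ ∈ edgeNbhd G u v) (hc : φ e₀ = c)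
    (huniq : ∀ e ∈ edgeNbhd G u v, φ e = c → e = e₀) :
    {e | e ∈ edgeNbhd G u v ∧ φ e = c}.ncard = 1 :=
  Set.ncard_eq_one.2
    ⟨e₀, Set.eq_singleton_iff_unique_mem.2 ⟨⟨he₀, hc⟩, fun e he => huniq e he.1 he.2⟩⟩

theorem exists_dominating_subset_forall_exists_privateNeighbor (S : Finset V) (T : Set V)
    (hS : ∀ b ∈ T, ∃ x ∈ S, G.Adj x b) :
    ∃ D ⊆ S, (∀ b ∈ T, ∃ x ∈ D, G.Adj x b) ∧
      ∀ x ∈ D, ∃ b ∈ T, G.Adj x b ∧ ∀ y ∈ D, G.Adj y b → y = x := by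
  classical
  obtain ⟨D, hD, hmin⟩ := (S.powerset.filter fun D => ∀ b ∈ T, ∃ x ∈ D, G.Adj x b).exists_min_image
    Finset.card ⟨S, Finset.mem_filter.2 ⟨Finset.mem_powerset_self S, hS⟩⟩
  simp only [Finset.mem_filter, Finset.mem_powerset] at hD hmin
  refine ⟨D, hD.1, hD.2, fun x hx => ?_⟩
  have hnot : ¬ ∀ b ∈ T, ∃ y ∈ D.erase x, G.Adj y b := fun hdom =>
    (Finset.card_erase_lt_of_mem hx).not_ge (hmin _ ⟨(D.erase_subset x).trans hD.1, hdom⟩)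
  push Not at hnot
  obtain ⟨b, hb, hbD⟩ := hnot
  have huniq : ∀ y ∈ D, G.Adj y b → y = x := fun y hy hyb =>
    by_contra fun hne => hbD y (Finset.mem_erase.2 ⟨hne, hy⟩) hyb
  obtain ⟨x', hx', hx'b⟩ := hD.2 b hb
  exact ⟨b, hb, huniq x' hx' hx'b ▸ hx'b, huniq⟩

structure IsPrivateDomination (G : SimpleGraph V) (A D : Set V) (p f : V → V) : Prop where
  subset : D ⊆ A
  adj_private : ∀ x ∈ D, G.Adj x (p x)
  eq_of_adj_private : ∀ x ∈ D, ∀ y ∈ D, G.Adj y (p x) → y = x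
  mem_dominator : ∀ b ∉ A, f b ∈ D
  adj_dominator : ∀ b ∉ A, G.Adj (f b) b

theorem exists_isPrivateDomination {A : Set V} (hA : A.Finite)
    (hdom : ∀ b ∉ A, ∃ a ∈ A, G.Adj a b) : ∃ D p f, IsPrivateDomination G A D p f := by
  obtain ⟨D, hDA, hDdom, hpriv⟩ :=
    exists_dominating_subset_forall_exists_privateNeighbor (G := G) hA.toFinset Aᶜ
      (by simpa using hdom)
  have hp_total : ∀ x, ∃ b, x ∈ D → G.Adj x b ∧ ∀ y ∈ D, G.Adj y b → y = x := fun x => by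
    by_cases hx : x ∈ D
    · exact (hpriv x hx).imp fun _ hb _ => hb.2
    · exact ⟨x, (absurd · hx)⟩
  have hf_total : ∀ b, ∃ x, b ∉ A → x ∈ D ∧ G.Adj x b := fun b => by
    by_cases hb : b ∈ A
    · exact ⟨b, (absurd hb ·)⟩
    · exact (hDdom b hb).imp fun _ hx _ => hx
  choose p hp using hp_total
  choose f hf using hf_total
  refine ⟨D, p, f, fun x hx => by simpa using hDA hx, fun x hx => (hp x hx).1,
    fun x hx => (hp x hx).2, fun b hb => (hf b hb).1, fun b hb => (hf b hb).2⟩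

open Classical in
noncomputable def dominationColoring (A D : Set V) (p f : V → V) (e : Sym2 V) : ℕ :=
  if ∃ x ∈ D, e = s(x, p x) then 1 else if ∃ b ∉ A, e = s(f b, b) then 2 else 0

section dominationColoring

variable {A D : Set V} {p f : V → V} {e : Sym2 V}

lemma dominationColoring_lt_three : dominationColoring A D p f e < 3 := by
  unfold dominationColoring
  split_ifs <;> norm_num

lemma dominationColoring_eq_one :
    dominationColoring A D p f e = 1 ↔ ∃ x ∈ D, e = s(x, p x) := by
  unfold dominationColoring
  split_ifs <;> simp_all

lemma dominationColoring_eq_two :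
    dominationColoring A D p f e = 2 ↔
      (¬∃ x ∈ D, e = s(x, p x)) ∧ ∃ b ∉ A, e = s(f b, b) := by
  unfold dominationColoring
  split_ifs <;> simp_all

end dominationColoring

namespace IsPrivateDomination

variable {A D : Set V} {p f : V → V}

lemma eq_of_meets (h : IsPrivateDomination G A D p f) {u v x y : V} (huv : G.Adj u v)
    (hx : x ∈ D) (hxuv : x = u ∨ p x = v) (hy : y ∈ D) (hyuv : y = u ∨ p y = v) : x = y := by
  rcases hxuv with rfl | rfl <;> rcases hyuv with rfl | hyv
  · rfl
  · exact h.eq_of_adj_private y hy x hx (hyv ▸ huv)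
  · exact (h.eq_of_adj_private x hx y hy huv).symm
  · exact (h.eq_of_adj_private x hx y hy (hyv ▸ h.adj_private y hy)).symm

lemma ncard_colorOne_eq_one (h : IsPrivateDomination G A D p f)
    (hbip : ∀ ⦃u v⦄, G.Adj u v → (u ∈ A ↔ v ∉ A)) {u v x : V} (huv : G.Adj u v) (hu : u ∈ A)
    (hx : x ∈ D) (hxuv : x = u ∨ p x = v) :
    {e | e ∈ edgeNbhd G u v ∧ dominationColoring A D p f e = 1}.ncard = 1 := by
  have hv : v ∉ A := (hbip huv).1 hu
  have hsides : ∀ y ∈ D, y ∈ A ∧ p y ∉ A := fun y hy =>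
    ⟨h.subset hy, (hbip (h.adj_private y hy)).1 (h.subset hy)⟩
  refine ncard_colorClass_eq_one (mem_edgeNbhd.2 ⟨h.adj_private x hx, ?_⟩)
    (dominationColoring_eq_one.2 ⟨x, hx, rfl⟩) fun e he he1 => ?_
  · rcases hxuv with rfl | rfl <;> simp
  obtain ⟨y, hy, rfl⟩ := dominationColoring_eq_one.1 he1
  have hyuv : y = u ∨ p y = v := by
    rcases (mem_edgeNbhd.1 he).2 with hmem | hmem <;> rw [Sym2.mem_iff] at hmem
    · exact .inl (hmem.resolve_right fun hup => (hsides y hy).2 (hup ▸ hu)).symm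
    · exact .inr (hmem.resolve_left fun hvy => hv (hvy ▸ (hsides y hy).1)).symm
  rw [h.eq_of_meets huv hy hyuv hx hxuv]

lemma ncard_colorTwo_eq_one (h : IsPrivateDomination G A D p f)
    (hbip : ∀ ⦃u v⦄, G.Adj u v → (u ∈ A ↔ v ∉ A)) {u v : V} (huv : G.Adj u v) (hu : u ∈ A)
    (huD : u ∉ D) (hvp : ∀ x ∈ D, p x ≠ v) :
    {e | e ∈ edgeNbhd G u v ∧ dominationColoring A D p f e = 2}.ncard = 1 := by
  have hv : v ∉ A := (hbip huv).1 hu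
  have hnot_one : ¬∃ x ∈ D, s(f v, v) = s(x, p x) := by
    rintro ⟨x, hx, hfv⟩
    rcases Sym2.eq_iff.1 hfv with ⟨-, rfl⟩ | ⟨-, rfl⟩
    exacts [hvp x hx rfl, hv (h.subset hx)]
  refine ncard_colorClass_eq_one (mem_edgeNbhd.2 ⟨h.adj_dominator v hv, .inr (by simp)⟩)
    (dominationColoring_eq_two.2 ⟨hnot_one, v, hv, rfl⟩) fun e he he2 => ?_
  obtain ⟨-, b, hb, rfl⟩ := dominationColoring_eq_two.1 he2
  rcases (mem_edgeNbhd.1 he).2 with hmem | hmem <;> rw [Sym2.mem_iff] at hmem <;>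
    rcases hmem with rfl | rfl
  exacts [(huD (h.mem_dominator b hb)).elim, (hb hu).elim,
    (hv (h.subset (h.mem_dominator b hb))).elim, rfl]

theorem isCF (h : IsPrivateDomination G A D p f)
    (hbip : ∀ ⦃u v⦄, G.Adj u v → (u ∈ A ↔ v ∉ A)) : IsCF G 3 (dominationColoring A D p f) := by
  refine ⟨fun _ _ => dominationColoring_lt_three, ?_⟩
  suffices key : ∀ ⦃u v⦄, G.Adj u v → u ∈ A →
      ∃ c, {e | e ∈ edgeNbhd G u v ∧ dominationColoring A D p f e = c}.ncard = 1 by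
    intro u v huv
    by_cases hu : u ∈ A
    · exact key huv hu
    · rw [edgeNbhd_comm]
      exact key huv.symm ((hbip huv.symm).2 hu)
  intro u v huv hu
  by_cases hmeet : ∃ x ∈ D, x = u ∨ p x = v
  · obtain ⟨x, hx, hxuv⟩ := hmeet
    exact ⟨1, h.ncard_colorOne_eq_one hbip huv hu hx hxuv⟩
  · push Not at hmeet
    exact ⟨2, h.ncard_colorTwo_eq_one hbip huv hu (fun huD => (hmeet u huD).1 rfl)
      fun x hx => (hmeet x hx).2⟩

end IsPrivateDomination

end SimpleGraph

theorem stmt_5 [Fintype V] (G : SimpleGraph V) (hbip : G.Colorable 2)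
    (hiso : ∀ v : V, ∃ u, G.Adj v u) :
    ∃ φ : Sym2 V → ℕ, IsCF G 3 φ := by
  obtain ⟨col⟩ := hbip
  let A : Set V := {w | col w = 0}
  have hside : ∀ ⦃u v⦄, G.Adj u v → (u ∈ A ↔ v ∉ A) := fun u v huv => by
    have := col.valid huv
    change col u = 0 ↔ col v ≠ 0
    omega
  have hdom : ∀ b ∉ A, ∃ a ∈ A, G.Adj a b := fun b hb =>
    (hiso b).imp fun a hba => ⟨(hside hba.symm).2 hb, hba.symm⟩
  obtain ⟨D, p, f, h⟩ := exists_isPrivateDomination (Set.toFinite A) hdom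
  exact ⟨_, h.isCF hside⟩
end

section
/- Let T be a tree with at least 2 edges. Then χ'_CF(T) = 2 if and only if there exists a nonempty proper subset F ⊆ E(T) such that for every edge uv of T: if uv ∈ F then d_F(u) + d_F(v) = 2 or (d_T(u) − d_F(u)) + (d_T(v) − d_F(v)) = 1; and if uv ∉ F then d_F(u) + d_F(v) = 1 or (d_T(u) − d_F(u)) + (d_T(v) − d_F(v)) = 2. -/
open SimpleGraph

variable {V : Type*}

/-!
A `{0, 1}`-edge coloring is determined by its class `F` of color `1`, and the edge `uv` sees a
color exactly once iff `|N[uv] ∩ F| = 1` or `|N[uv] \ F| = 1`, where `N[uv]` is its closed edge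
neighborhood. Since `uv` is counted at both of its ends, `|N[uv] ∩ F| = d_F(u) + d_F(v) - [uv ∈ F]`,
and likewise for the complement `E(T) \ F`, whose degrees are `d_T - d_F`; this turns the two
alternatives into the stated degree conditions. In a connected graph with at least two edges every
`N[uv]` has at least two edges, so one color never suffices, and `F` can be neither empty nor all
of `E(T)`.
-/

namespace SimpleGraph

variable {G : SimpleGraph V} {u v : V} {F : Set (Sym2 V)}

lemma edgeNbhd_subset_edgeSet : edgeNbhd G u v ⊆ G.edgeSet :=
  Set.union_subset (G.incidenceSet_subset u) (G.incidenceSet_subset v)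

lemma edgeNbhd_sdiff_eq_inter : edgeNbhd G u v \ F = edgeNbhd G u v ∩ (G.edgeSet \ F) := by
  rw [← Set.inter_sdiff_assoc, Set.inter_eq_left.2 edgeNbhd_subset_edgeSet]

lemma edegOn_eq_ncard_incidenceSet_inter (hF : F ⊆ G.edgeSet) (w : V) :
    edegOn F w = (G.incidenceSet w ∩ F).ncard := by
  unfold edegOn
  congr 1
  ext e
  exact ⟨fun ⟨hf, hw⟩ => ⟨⟨hF hf, hw⟩, hf⟩, fun ⟨⟨_, hw⟩, hf⟩ => ⟨hf, hw⟩⟩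

lemma edegOn_edgeSet_sdiff (hF : F ⊆ G.edgeSet) (hFfin : F.Finite) (w : V) :
    edegOn (G.edgeSet \ F) w = edegOn G.edgeSet w - edegOn F w := by
  unfold edegOn
  have hsub : {e ∈ F | w ∈ e} ⊆ {e ∈ G.edgeSet | w ∈ e} := fun _ ⟨hf, hw⟩ => ⟨hF hf, hw⟩
  rw [← Set.ncard_sdiff hsub (hFfin.subset fun _ h => h.1)]
  congr 1
  ext e
  simp only [Set.mem_ofPred_eq, Set.mem_sdiff]
  tauto

lemma ncard_edgeNbhd_inter_add_ite [Decidable (s(u, v) ∈ F)] (hF : F ⊆ G.edgeSet)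
    (hFfin : F.Finite) (h : G.Adj u v) :
    (edgeNbhd G u v ∩ F).ncard + (if s(u, v) ∈ F then 1 else 0) = edegOn F u + edegOn F v := by
  have hunion : G.incidenceSet u ∩ F ∪ G.incidenceSet v ∩ F = edgeNbhd G u v ∩ F :=
    (Set.union_inter_distrib_right _ _ _).symm
  have hinter : G.incidenceSet u ∩ F ∩ (G.incidenceSet v ∩ F) = {s(u, v)} ∩ F := by
    rw [Set.inter_inter_inter_comm, Set.inter_self, G.incidenceSet_inter_incidenceSet_of_adj h]
  have hsingle : ({s(u, v)} ∩ F).ncard = if s(u, v) ∈ F then 1 else 0 := by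
    split_ifs with hm
    · rw [Set.singleton_inter_of_mem hm, Set.ncard_singleton]
    · rw [Set.singleton_inter_eq_empty.2 hm, Set.ncard_empty]
  rw [edegOn_eq_ncard_incidenceSet_inter hF, edegOn_eq_ncard_incidenceSet_inter hF, ← hunion,
    ← Set.ncard_union_add_ncard_inter _ _ (hFfin.subset Set.inter_subset_right)
      (hFfin.subset Set.inter_subset_right), hinter, hsingle]

lemma edge_degree_condition_iff (hE : G.edgeSet.Finite) (hF : F ⊆ G.edgeSet) (h : G.Adj u v) :
    ((s(u, v) ∈ F →
        (edegOn F u + edegOn F v = 2 ∨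
          (edegOn G.edgeSet u - edegOn F u) + (edegOn G.edgeSet v - edegOn F v) = 1)) ∧
      (s(u, v) ∉ F →
        (edegOn F u + edegOn F v = 1 ∨
          (edegOn G.edgeSet u - edegOn F u) + (edegOn G.edgeSet v - edegOn F v) = 2))) ↔
      (edgeNbhd G u v ∩ F).ncard = 1 ∨ (edgeNbhd G u v \ F).ncard = 1 := by
  classical
  have hin := ncard_edgeNbhd_inter_add_ite hF (hE.subset hF) h
  have hout := ncard_edgeNbhd_inter_add_ite Set.sdiff_subset (hE.sdiff (t := F)) h
  rw [edegOn_edgeSet_sdiff hF (hE.subset hF), edegOn_edgeSet_sdiff hF (hE.subset hF)] at hout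
  rw [edgeNbhd_sdiff_eq_inter]
  by_cases hm : s(u, v) ∈ F
  · have hm' : s(u, v) ∉ G.edgeSet \ F := fun h => h.2 hm
    simp only [hm, hm', if_true, if_false, true_implies, not_true_eq_false, false_implies,
      and_true, add_zero] at hin hout ⊢
    omega
  · have hm' : s(u, v) ∈ G.edgeSet \ F := ⟨h, hm⟩
    simp only [hm, hm', if_true, if_false, true_implies, false_implies, not_false_eq_true,
      true_and, add_zero] at hin hout ⊢
    omega

/-- `F` is the class of color `1` of a conflict-free edge coloring with colors `0` and `1`. -/
def IsCFColorClass (G : SimpleGraph V) (F : Set (Sym2 V)) : Prop :=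
  ∀ ⦃u v⦄, G.Adj u v → (edgeNbhd G u v ∩ F).ncard = 1 ∨ (edgeNbhd G u v \ F).ncard = 1

lemma exists_ncard_eq_one_iff_of_lt_two {φ : Sym2 V → ℕ} (hφ : ∀ e ∈ G.edgeSet, φ e < 2)
    (u v : V) :
    (∃ c, {e | e ∈ edgeNbhd G u v ∧ φ e = c}.ncard = 1) ↔
      (edgeNbhd G u v ∩ {e ∈ G.edgeSet | φ e = 1}).ncard = 1 ∨
        (edgeNbhd G u v \ {e ∈ G.edgeSet | φ e = 1}).ncard = 1 := by
  have hone : {e | e ∈ edgeNbhd G u v ∧ φ e = 1} = edgeNbhd G u v ∩ {e ∈ G.edgeSet | φ e = 1} := by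
    ext e
    exact ⟨fun ⟨hN, he⟩ => ⟨hN, edgeNbhd_subset_edgeSet hN, he⟩, fun ⟨hN, _, he⟩ => ⟨hN, he⟩⟩
  have hzero : {e | e ∈ edgeNbhd G u v ∧ φ e = 0} = edgeNbhd G u v \ {e ∈ G.edgeSet | φ e = 1} := by
    ext e
    refine ⟨fun ⟨hN, he⟩ => ⟨hN, fun h => by simp [he] at h⟩, fun ⟨hN, he⟩ => ⟨hN, ?_⟩⟩
    have := hφ e (edgeNbhd_subset_edgeSet hN)
    have : φ e ≠ 1 := fun h => he ⟨edgeNbhd_subset_edgeSet hN, h⟩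
    omega
  have hlarge (c : ℕ) : {e | e ∈ edgeNbhd G u v ∧ φ e = c + 2} = ∅ :=
    Set.eq_empty_of_forall_notMem fun e ⟨hN, he⟩ => by
      have := hφ e (edgeNbhd_subset_edgeSet hN)
      omega
  constructor
  · rintro ⟨_ | _ | c, hc⟩
    · exact Or.inr (hzero ▸ hc)
    · exact Or.inl (hone ▸ hc)
    · simp [hlarge] at hc
  · rintro (h | h)
    · exact ⟨1, hone ▸ h⟩
    · exact ⟨0, hzero ▸ h⟩

lemma isCF_two_iff {φ : Sym2 V → ℕ} :
    IsCF G 2 φ ↔ (∀ e ∈ G.edgeSet, φ e < 2) ∧ IsCFColorClass G {e ∈ G.edgeSet | φ e = 1} :=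
  ⟨fun ⟨hφ, hsat⟩ => ⟨hφ, fun _ _ h => (exists_ncard_eq_one_iff_of_lt_two hφ _ _).1 (hsat h)⟩,
    fun ⟨hφ, hF⟩ => ⟨hφ, fun _ _ h => (exists_ncard_eq_one_iff_of_lt_two hφ _ _).2 (hF h)⟩⟩

lemma exists_isCF_two_iff : (∃ φ, IsCF G 2 φ) ↔ ∃ F ⊆ G.edgeSet, IsCFColorClass G F := by
  classical
  constructor
  · rintro ⟨φ, hφ⟩
    exact ⟨_, fun _ h => h.1, (isCF_two_iff.1 hφ).2⟩
  · rintro ⟨F, hF, hcc⟩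
    refine ⟨fun e => if e ∈ F then 1 else 0, isCF_two_iff.2 ⟨fun e _ => by split_ifs <;> omega, ?_⟩⟩
    convert hcc
    ext e
    by_cases he : e ∈ F
    · simp [he, hF he]
    · simp [he]

lemma IsCFColorClass.nonempty (hF : IsCFColorClass G F) (h : G.Adj u v)
    (hN : 2 ≤ (edgeNbhd G u v).ncard) : F.Nonempty := by
  refine Set.nonempty_iff_ne_empty.2 fun hempty => ?_
  have := hF h
  simp only [hempty, Set.inter_empty, Set.ncard_empty, Set.sdiff_empty] at this
  omega

lemma IsCFColorClass.ne_edgeSet (hF : IsCFColorClass G F) (h : G.Adj u v)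
    (hN : 2 ≤ (edgeNbhd G u v).ncard) : F ≠ G.edgeSet := by
  rintro rfl
  have := hF h
  simp only [Set.inter_eq_left.2 edgeNbhd_subset_edgeSet,
    Set.sdiff_eq_empty.2 edgeNbhd_subset_edgeSet, Set.ncard_empty] at this
  omega

lemma IsCF.two_le {k : ℕ} {φ : Sym2 V → ℕ} (hφ : IsCF G k φ) (h : G.Adj u v)
    (hN : 2 ≤ (edgeNbhd G u v).ncard) : 2 ≤ k := by
  by_contra! hk
  have hzero : ∀ e ∈ edgeNbhd G u v, φ e = 0 := fun e he => by
    have := hφ.1 e (edgeNbhd_subset_edgeSet he)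
    omega
  obtain ⟨_ | c, hc⟩ := hφ.2 h
  · rw [Set.sep_eq_self_iff_mem_true.2 hzero] at hc
    omega
  · have : {e | e ∈ edgeNbhd G u v ∧ φ e = c + 1} = ∅ :=
      Set.eq_empty_of_forall_notMem fun e ⟨hN, he⟩ => by simp [hzero e hN] at he
    simp [this] at hc

lemma cfIndex_eq_two_iff (h : G.Adj u v) (hN : 2 ≤ (edgeNbhd G u v).ncard) :
    cfIndex G = 2 ↔ ∃ φ, IsCF G 2 φ := by
  refine ⟨fun h2 => h2 ▸ Nat.sInf_mem (Nat.nonempty_of_sInf_eq_succ h2), fun hφ => ?_⟩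
  exact le_antisymm (Nat.sInf_le hφ) (le_csInf ⟨2, hφ⟩ fun _ ⟨_, hψ⟩ => hψ.two_le h hN)

lemma two_le_ncard_edgeNbhd (hG : G.Connected) (hE : 2 ≤ G.edgeSet.ncard) (h : G.Adj u v) :
    2 ≤ (edgeNbhd G u v).ncard := by
  -- An edge `e ≠ uv` has an endpoint `w ∉ {u, v}`, and a path from `u` to `w` leaves `{u, v}`
  -- through an edge of `edgeNbhd G u v` other than `uv`.
  obtain ⟨e, he, hne⟩ := Set.exists_ne_of_one_lt_ncard hE s(u, v)
  obtain ⟨w, -, hw⟩ : ∃ w ∈ e, w ∉ ({u, v} : Set V) := by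
    by_contra! hcon
    induction e using Sym2.ind with
    | _ a b =>
    have hab : a ≠ b := G.ne_of_adj he
    rcases hcon a (Sym2.mem_mk_left a b) with rfl | rfl <;>
      rcases hcon b (Sym2.mem_mk_right _ b) with rfl | rfl
    all_goals first | exact hab rfl | exact hne rfl | exact hne Sym2.eq_swap
  obtain ⟨d, -, hd, hd'⟩ :=
    (hG.preconnected u w).some.exists_boundary_dart {u, v} (Set.mem_insert u {v}) hw
  have hdN : d.edge ∈ edgeNbhd G u v := by
    rcases hd with hd | hd
    · exact Or.inl ⟨d.edge_mem, hd ▸ Sym2.mem_mk_left _ _⟩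
    · exact Or.inr ⟨d.edge_mem, hd ▸ Sym2.mem_mk_left _ _⟩
  have hne' : d.edge ≠ s(u, v) := fun heq =>
    hd' (Sym2.mem_iff.1 (heq ▸ Sym2.mem_mk_right d.fst d.snd))
  have hfin : (edgeNbhd G u v).Finite :=
    (Set.finite_of_ncard_pos (s := G.edgeSet) (by omega)).subset edgeNbhd_subset_edgeSet
  exact (Set.one_lt_ncard hfin).2 ⟨_, hdN, _, Or.inl (G.mk'_mem_incidenceSet_left_iff.2 h), hne'⟩

end SimpleGraph

theorem stmt_14_general (T : SimpleGraph V) (hT : T.IsTree)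
    (hE : 2 ≤ T.edgeSet.ncard) :
    cfIndex T = 2 ↔
      ∃ F : Set (Sym2 V), F ⊆ T.edgeSet ∧ F.Nonempty ∧ F ≠ T.edgeSet ∧
        ∀ ⦃u v⦄, T.Adj u v →
          (s(u, v) ∈ F →
            (edegOn F u + edegOn F v = 2 ∨
              (edegOn T.edgeSet u - edegOn F u) + (edegOn T.edgeSet v - edegOn F v) = 1)) ∧
          (s(u, v) ∉ F →
            (edegOn F u + edegOn F v = 1 ∨
              (edegOn T.edgeSet u - edegOn F u) + (edegOn T.edgeSet v - edegOn F v) = 2)) := by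
  have hfin : T.edgeSet.Finite := Set.finite_of_ncard_pos (by omega)
  obtain ⟨u, v, huv⟩ := T.ne_bot_iff_exists_adj.1
    (T.edgeSet_nonempty.1 (Set.nonempty_of_ncard_ne_zero (by omega)))
  have hN := two_le_ncard_edgeNbhd hT.connected hE huv
  rw [cfIndex_eq_two_iff huv hN, exists_isCF_two_iff]
  constructor
  · rintro ⟨F, hF, hcc⟩
    exact ⟨F, hF, hcc.nonempty huv hN, hcc.ne_edgeSet huv hN,
      fun _ _ h => (edge_degree_condition_iff hfin hF h).2 (hcc h)⟩
  · rintro ⟨F, hF, -, -, hcond⟩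
    exact ⟨F, hF, fun _ _ h => (edge_degree_condition_iff hfin hF h).1 (hcond h)⟩

theorem stmt_14 [Fintype V] (T : SimpleGraph V) (hT : T.IsTree)
    (hE : 2 ≤ T.edgeSet.ncard) :
    cfIndex T = 2 ↔
      ∃ F : Set (Sym2 V), F ⊆ T.edgeSet ∧ F.Nonempty ∧ F ≠ T.edgeSet ∧
        ∀ ⦃u v⦄, T.Adj u v →
          (s(u, v) ∈ F →
            (edegOn F u + edegOn F v = 2 ∨
              (edegOn T.edgeSet u - edegOn F u) + (edegOn T.edgeSet v - edegOn F v) = 1)) ∧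
          (s(u, v) ∉ F →
            (edegOn F u + edegOn F v = 1 ∨
              (edegOn T.edgeSet u - edegOn F u) + (edegOn T.edgeSet v - edegOn F v) = 2)) :=
  stmt_14_general T hT hE
end
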